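/- The weight 26 normalized Hecke eigenform f₂₆ = Δ·E₆·E₄² on SL₂(ℤ) has integer Fourier coefficients a(n) with a(2) = -48, a(3) = -195804, a(5) = -741989850, a(7) = 39080597192, a(11) = 8419515299052, a(13) = -81651045335314, a(17) = -2519900028948078, a(19) = -6082056370308940, and for each prime p ∈ {2, 3, 5, 7, 11, 13, 17, 19} one has p | a(p). -/

import Mathlib

open Polynomial Finset

/-- The `n`-th Fourier coefficient of `Δ = q ∏_{k≥1}(1-q^k)^24`, computed from the
truncated product (factors `(1 - q^k)` with `k > n` do not affect the coefficient). -/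
noncomputable def deltaCoeff (n : ℕ) : ℤ :=
  ((X : ℤ[X]) * ∏ k ∈ Finset.range n, (1 - (X : ℤ[X]) ^ (k + 1)) ^ 24).coeff n

/-- The `n`-th Fourier coefficient of `E₄ = 1 + 240 Σ σ₃(n) qⁿ`. -/
def e4Coeff (n : ℕ) : ℤ := if n = 0 then 1 else 240 * ∑ d ∈ n.divisors, (d : ℤ) ^ 3

/-- The `n`-th Fourier coefficient of `E₆ = 1 - 504 Σ σ₅(n) qⁿ`. -/
def e6Coeff (n : ℕ) : ℤ := if n = 0 then 1 else -504 * ∑ d ∈ n.divisors, (d : ℤ) ^ 5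

/-- The `n`-th Fourier coefficient of `f₂₆ = Δ·E₆·E₄²`, as a quadruple convolution. -/
noncomputable def f26Coeff (n : ℕ) : ℤ :=
  ∑ ij ∈ Finset.HasAntidiagonal.antidiagonal n, ∑ kl ∈ Finset.HasAntidiagonal.antidiagonal ij.2,
    ∑ uv ∈ Finset.HasAntidiagonal.antidiagonal kl.2,
      deltaCoeff ij.1 * e6Coeff kl.1 * e4Coeff uv.1 * e4Coeff uv.2

/- The coefficients of `Δ = q ∏ (1 - qᵏ)²⁴` below degree 20 only see the factors with `k ≤ 18`,
since `1 - qᵏ ≡ 1 mod qᵏ`. Truncation below a fixed degree commutes with multiplication, so they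
are the output of a list convolution that the kernel evaluates: they are Ramanujan's `τ(n)`.
Each `a(p)` is then a finite convolution of known integers, and `p ∣ a(p)` is read off its value. -/

def truncMul (N : ℕ) (a b : List ℤ) : List ℤ :=
  (List.range N).map fun m => ∑ i ∈ range (m + 1), a.getD i 0 * b.getD (m - i) 0

noncomputable def truncCoeffs (N : ℕ) (p : ℤ[X]) : List ℤ := (List.range N).map p.coeff

lemma getD_truncCoeffs {N m : ℕ} (p : ℤ[X]) (hm : m < N) :
    (truncCoeffs N p).getD m 0 = p.coeff m := by
  simp [truncCoeffs, hm]

lemma truncCoeffs_mul (N : ℕ) (p q : ℤ[X]) :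
    truncCoeffs N (p * q) = truncMul N (truncCoeffs N p) (truncCoeffs N q) := by
  refine List.map_congr_left fun m hm => ?_
  rw [List.mem_range] at hm
  rw [coeff_mul, Nat.sum_antidiagonal_eq_sum_range_succ_mk]
  refine sum_congr rfl fun i hi => ?_
  rw [mem_range] at hi
  rw [getD_truncCoeffs p (by omega), getD_truncCoeffs q (by omega)]

lemma truncCoeffs_pow (N : ℕ) (p : ℤ[X]) (k : ℕ) :
    truncCoeffs N (p ^ k) = (truncMul N (truncCoeffs N p))^[k] (truncCoeffs N 1) := by
  induction k with
  | zero => rfl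
  | succ k ih => rw [pow_succ', truncCoeffs_mul, ih, Function.iterate_succ_apply']

noncomputable def eulerProd (n : ℕ) : ℤ[X] := ∏ k ∈ range n, (1 - X ^ (k + 1))

def eulerList (N : ℕ) : ℕ → List ℤ
  | 0 => (List.range N).map fun m => if m = 0 then 1 else 0
  | n + 1 => truncMul N (eulerList N n)
      ((List.range N).map fun m => (if m = 0 then 1 else 0) - if m = n + 1 then 1 else 0)

lemma truncCoeffs_one (N : ℕ) : truncCoeffs N 1 = eulerList N 0 := by
  simp [truncCoeffs, eulerList, coeff_one]

lemma truncCoeffs_eulerProd (N n : ℕ) : truncCoeffs N (eulerProd n) = eulerList N n := by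
  induction n with
  | zero => simpa [eulerProd] using truncCoeffs_one N
  | succ n ih =>
    rw [eulerProd, prod_range_succ, ← eulerProd, truncCoeffs_mul, ih, eulerList]
    congr 1
    refine List.map_congr_left fun m _ => ?_
    rw [coeff_sub, coeff_one, coeff_X_pow]

lemma X_pow_dvd_eulerProd_sub {n m : ℕ} (h : n ≤ m) :
    X ^ (n + 1) ∣ eulerProd m - eulerProd n := by
  induction m, h using Nat.le_induction with
  | base => simp
  | succ m hnm ih =>
    have hsplit : eulerProd (m + 1) - eulerProd n =
        (eulerProd m - eulerProd n) - eulerProd m * X ^ (m + 1) := by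
      rw [eulerProd, prod_range_succ, ← eulerProd]; ring
    rw [hsplit]
    exact dvd_sub ih (dvd_mul_of_dvd_right (pow_dvd_pow X (by omega)) _)

lemma coeff_eulerProd_pow_eq_of_le {n m : ℕ} (h : n ≤ m) (k : ℕ) :
    (eulerProd m ^ k).coeff n = (eulerProd n ^ k).coeff n := by
  have hdvd : X ^ (n + 1) ∣ eulerProd m ^ k - eulerProd n ^ k :=
    (X_pow_dvd_eulerProd_sub h).trans (sub_dvd_pow_sub_pow _ _ k)
  rw [← sub_eq_zero, ← coeff_sub]
  exact X_pow_dvd_iff.mp hdvd n n.lt_succ_self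

lemma coeff_eulerProd_pow_congr {n m₁ m₂ : ℕ} (h₁ : n ≤ m₁) (h₂ : n ≤ m₂) (k : ℕ) :
    (eulerProd m₁ ^ k).coeff n = (eulerProd m₂ ^ k).coeff n := by
  rw [coeff_eulerProd_pow_eq_of_le h₁, coeff_eulerProd_pow_eq_of_le h₂]

lemma deltaCoeff_succ (n : ℕ) : deltaCoeff (n + 1) = (eulerProd (n + 1) ^ 24).coeff n := by
  rw [deltaCoeff, coeff_X_mul, prod_pow, eulerProd]

/-- Ramanujan's `τ(0), …, τ(19)`. -/
def tauValues : List ℤ :=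
  [0, 1, -24, 252, -1472, 4830, -6048, -16744, 84480, -113643, -115920, 534612, -370944,
    -577738, 401856, 1217160, 987136, -6905934, 2727432, 10661420]

set_option maxRecDepth 10000 in
lemma truncCoeffs_eulerProd_pow_24 : truncCoeffs 19 (eulerProd 18 ^ 24) = tauValues.tail := by
  rw [truncCoeffs_pow, truncCoeffs_eulerProd, truncCoeffs_one]
  decide

lemma deltaCoeff_eq_getD_tauValues {n : ℕ} (hn : n < 20) :
    deltaCoeff n = tauValues.getD n 0 := by
  obtain _ | n := n
  · simp [deltaCoeff, tauValues]
  rw [deltaCoeff_succ, coeff_eulerProd_pow_congr (m₂ := 18) (by omega) (by omega),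
    ← getD_truncCoeffs _ (by omega : n < 19), truncCoeffs_eulerProd_pow_24]
  simp [tauValues]

def f26CoeffOfTauValues (n : ℕ) : ℤ :=
  ∑ ij ∈ antidiagonal n, ∑ kl ∈ antidiagonal ij.2, ∑ uv ∈ antidiagonal kl.2,
    tauValues.getD ij.1 0 * e6Coeff kl.1 * e4Coeff uv.1 * e4Coeff uv.2

lemma f26Coeff_eq_of_lt {n : ℕ} (hn : n < 20) : f26Coeff n = f26CoeffOfTauValues n :=
  sum_congr rfl fun ij hij => by
    rw [deltaCoeff_eq_getD_tauValues (by have := mem_antidiagonal.mp hij; omega)]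
/-- The weight-26 normalized Hecke eigenform `f₂₆ = Δ·E₆·E₄²` has coefficients
`a(2) = -48`, `a(3) = -195804`, …, and `p ∣ a(p)` for each prime
`p ∈ {2,3,5,7,11,13,17,19}`. -/
theorem stmt17 :
    f26Coeff 2 = -48 ∧ f26Coeff 3 = -195804 ∧ f26Coeff 5 = -741989850 ∧
    f26Coeff 7 = 39080597192 ∧ f26Coeff 11 = 8419515299052 ∧
    f26Coeff 13 = -81651045335314 ∧ f26Coeff 17 = -2519900028948078 ∧
    f26Coeff 19 = -6082056370308940 ∧
    ∀ p ∈ ({2, 3, 5, 7, 11, 13, 17, 19} : Finset ℕ), (p : ℤ) ∣ f26Coeff p := by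
  have h2 : f26Coeff 2 = -48 := by rw [f26Coeff_eq_of_lt (by norm_num)]; decide
  have h3 : f26Coeff 3 = -195804 := by rw [f26Coeff_eq_of_lt (by norm_num)]; decide
  have h5 : f26Coeff 5 = -741989850 := by rw [f26Coeff_eq_of_lt (by norm_num)]; decide
  have h7 : f26Coeff 7 = 39080597192 := by rw [f26Coeff_eq_of_lt (by norm_num)]; decide
  have h11 : f26Coeff 11 = 8419515299052 := by rw [f26Coeff_eq_of_lt (by norm_num)]; decide
  have h13 : f26Coeff 13 = -81651045335314 := by rw [f26Coeff_eq_of_lt (by norm_num)]; decide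
  have h17 : f26Coeff 17 = -2519900028948078 := by rw [f26Coeff_eq_of_lt (by norm_num)]; decide
  have h19 : f26Coeff 19 = -6082056370308940 := by rw [f26Coeff_eq_of_lt (by norm_num)]; decide
  refine ⟨h2, h3, h5, h7, h11, h13, h17, h19, ?_⟩
  simp only [mem_insert, mem_singleton, forall_eq_or_imp, forall_eq,
    h2, h3, h5, h7, h11, h13, h17, h19]
  norm_num
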